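/- arXiv:2210.10574 — 3 statements merged into one kernel-verified Lean document; each statement's English description precedes it below -/
import Mathlib

section
/- In CCS⁻ (CCS without restriction), if R is a weak bisimulation up-to context, then R is contained in weak bisimilarity: P R Q implies P ≈ Q. -/
/-- Processes of CCS⁻ (CCS without restriction): 0, input prefix, output prefix,
    parallel composition, replication. Names are natural numbers. -/
inductive Proc : Type where
  | nil : Proc
  | inp : ℕ → Proc → Proc
  | out : ℕ → Proc → Proc
  | par : Proc → Proc → Proc
  | bang : Proc → Proc

/-- Actions: input `a`, output `ā`, or the internal action `τ`. -/
inductive Act : Type where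
  | inp : ℕ → Act
  | out : ℕ → Act
  | tau : Act

/-- The labelled transition relation of CCS⁻. -/
inductive Step : Proc → Act → Proc → Prop where
  | inp (a : ℕ) (P : Proc) : Step (.inp a P) (.inp a) P
  | out (a : ℕ) (P : Proc) : Step (.out a P) (.out a) P
  | comL {a : ℕ} {P P' Q Q' : Proc} :
      Step P (.out a) P' → Step Q (.inp a) Q' → Step (.par P Q) .tau (.par P' Q')
  | comR {a : ℕ} {P P' Q Q' : Proc} :
      Step P (.out a) P' → Step Q (.inp a) Q' → Step (.par Q P) .tau (.par Q' P')
  | parL {α : Act} {P P' : Proc} (Q : Proc) :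
      Step P α P' → Step (.par P Q) α (.par P' Q)
  | parR {α : Act} {P P' : Proc} (Q : Proc) :
      Step P α P' → Step (.par Q P) α (.par Q P')
  | bang {α : Act} {P P' : Proc} :
      Step P α P' → Step (.bang P) α (.par P' (.bang P))
  | bangCom {a : ℕ} {P P' P'' : Proc} :
      Step P (.inp a) P' → Step P (.out a) P'' →
      Step (.bang P) .tau (.par P' (.par P'' (.bang P)))

/-- A single τ-transition. -/
def TauStep (P Q : Proc) : Prop := Step P .tau Q

/-- `P ⟹ Q`: reflexive–transitive closure of τ-transitions. -/
def Taus : Proc → Proc → Prop := Relation.ReflTransGen TauStep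

/-- `P ⟹α Q`: `P ⟹ ⟶α ⟹ Q`. -/
def WeakStep (P : Proc) (α : Act) (Q : Proc) : Prop :=
  ∃ P₁ P₂, Taus P P₁ ∧ Step P₁ α P₂ ∧ Taus P₂ Q

/-- `P ⟹α̂ Q`: `P ⟹ Q` if `α = τ`, and `P ⟹α Q` otherwise. -/
def WeakHat (P : Proc) (α : Act) (Q : Proc) : Prop :=
  match α with
  | .tau => Taus P Q
  | _ => WeakStep P α Q

/-- `P ⟶τ^k Q`: exactly `k` consecutive τ-transitions. -/
def TauN : Proc → ℕ → Proc → Prop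
  | P, 0, Q => P = Q
  | P, n + 1, Q => ∃ P₁, TauStep P P₁ ∧ TauN P₁ n Q

/-- `P` is divergent: there is an infinite sequence of τ-transitions from `P`. -/
def Divergent (P : Proc) : Prop :=
  ∃ f : ℕ → Proc, f 0 = P ∧ ∀ n, TauStep (f n) (f (n + 1))

/-- A relation is divergence-sensitive if related processes diverge together. -/
def DivSensitive (R : Proc → Proc → Prop) : Prop :=
  ∀ P Q, R P Q → (Divergent P ↔ Divergent Q)

/-- Weak bisimulation (symmetric, divergence-sensitive). -/
def IsWeakBisim (R : Proc → Proc → Prop) : Prop :=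
  Symmetric R ∧ DivSensitive R ∧
    ∀ P Q, R P Q → ∀ α P', Step P α P' → ∃ Q', WeakHat Q α Q' ∧ R P' Q'

/-- `P ≈ Q`: weak bisimilarity. -/
def WBisim (P Q : Proc) : Prop := ∃ R, IsWeakBisim R ∧ R P Q

/-- Strong bisimulation (symmetric, divergence-sensitive). -/
def IsStrongBisim (R : Proc → Proc → Prop) : Prop :=
  Symmetric R ∧ DivSensitive R ∧
    ∀ P Q, R P Q → ∀ α P', Step P α P' → ∃ Q', Step Q α Q' ∧ R P' Q'

/-- `P ~ Q`: strong bisimilarity. -/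
def SBisim (P Q : Proc) : Prop := ∃ R, IsStrongBisim R ∧ R P Q

/-- Structural congruence: the smallest congruence with `P|0 ≡ P`,
    `P|(Q|R) ≡ (P|Q)|R`, `P|Q ≡ Q|P`. -/
inductive SC : Proc → Proc → Prop where
  | refl (P : Proc) : SC P P
  | symm {P Q : Proc} : SC P Q → SC Q P
  | trans {P Q R : Proc} : SC P Q → SC Q R → SC P R
  | inp (a : ℕ) {P Q : Proc} : SC P Q → SC (.inp a P) (.inp a Q)
  | out (a : ℕ) {P Q : Proc} : SC P Q → SC (.out a P) (.out a Q)
  | par {P P' Q Q' : Proc} : SC P P' → SC Q Q' → SC (.par P Q) (.par P' Q')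
  | bang {P Q : Proc} : SC P Q → SC (.bang P) (.bang Q)
  | parNil (P : Proc) : SC (.par P .nil) P
  | parAssoc (P Q R : Proc) : SC (.par P (.par Q R)) (.par (.par P Q) R)
  | parComm (P Q : Proc) : SC (.par P Q) (.par Q P)

/-- Contexts: process terms with a single hole. -/
inductive Ctx : Type where
  | hole : Ctx
  | inp : ℕ → Ctx → Ctx
  | out : ℕ → Ctx → Ctx
  | parL : Ctx → Proc → Ctx
  | parR : Proc → Ctx → Ctx
  | bang : Ctx → Ctx

/-- `C.fill P`: the process `C[P]`. -/
def Ctx.fill : Ctx → Proc → Proc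
  | .hole, P => P
  | .inp a C, P => .inp a (C.fill P)
  | .out a C, P => .out a (C.fill P)
  | .parL C Q, P => .par (C.fill P) Q
  | .parR Q C, P => .par Q (C.fill P)
  | .bang C, P => .bang (C.fill P)

/-- Weak bisimulation up-to context. -/
def IsWeakBisimUptoCtx (R : Proc → Proc → Prop) : Prop :=
  Symmetric R ∧ DivSensitive R ∧
    ∀ P Q, R P Q → ∀ α P', Step P α P' →
      ∃ Q', WeakHat Q α Q' ∧
        ∃ (C : Ctx) (P₁ Q₁ : Proc), SC P' (C.fill P₁) ∧ SC Q' (C.fill Q₁) ∧ R P₁ Q₁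

/-- Quasi-strong bisimulation: visible actions are matched by `⟹ ⟶α`,
    τ-actions are matched by a single τ. -/
def IsQSBisim (R : Proc → Proc → Prop) : Prop :=
  Symmetric R ∧ DivSensitive R ∧
    ∀ P Q, R P Q →
      (∀ α P', Step P α P' → α ≠ .tau →
          ∃ Q₁ Q', Taus Q Q₁ ∧ Step Q₁ α Q' ∧ R P' Q') ∧
      (∀ P', Step P .tau P' → ∃ Q', Step Q .tau Q' ∧ R P' Q')

/-- `P ≃qs Q`: quasi-strong bisimilarity. -/
def QSBisim (P Q : Proc) : Prop := ∃ R, IsQSBisim R ∧ R P Q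

/-- Quasi-strong branching bisimulation. -/
def IsQSBBisim (R : Proc → Proc → Prop) : Prop :=
  Symmetric R ∧ DivSensitive R ∧
    ∀ P Q, R P Q →
      (∀ α P', Step P α P' → α ≠ .tau →
          ∃ Q'' Q', Taus Q Q'' ∧ Step Q'' α Q' ∧ R P Q'' ∧ R P' Q') ∧
      (∀ P', Step P .tau P' → ∃ Q', Step Q .tau Q' ∧ R P' Q')

/-- `P ≃qsb Q`: quasi-strong branching bisimilarity. -/
def QSBBisim (P Q : Proc) : Prop := ∃ R, IsQSBBisim R ∧ R P Q

/-- Branching bisimulation (divergence-sensitive). -/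
def IsBrBisim (R : Proc → Proc → Prop) : Prop :=
  Symmetric R ∧ DivSensitive R ∧
    ∀ P Q, R P Q → ∀ α P', Step P α P' →
      (α = .tau ∧ R P' Q) ∨
      ∃ Q'' Q', Taus Q Q'' ∧ Step Q'' α Q' ∧ R P Q'' ∧ R P' Q'

/-- `P ≃b Q`: branching bisimilarity. -/
def BrBisim (P Q : Proc) : Prop := ∃ R, IsBrBisim R ∧ R P Q

/-- τ-sequences all of whose steps are state-preserving. -/
def PresTaus : Proc → Proc → Prop :=
  Relation.ReflTransGen (fun P Q => TauStep P Q ∧ WBisim P Q)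

/-- `Stab P k`: `P` reaches in exactly `k` τ-steps a process all of whose
    τ-derivatives are weakly bisimilar to it. -/
def Stab (P : Proc) (k : ℕ) : Prop :=
  ∃ P', TauN P k P' ∧ ∀ P'', Taus P' P'' → WBisim P' P''

/-!
Let `X` and `Y` be related when, up to structural congruence extended by `!P ≡ P | !P` (a strong
bisimulation), they fill one context built from prefixes, parallel composition and replication
with `R`-related pairs. Since `R` is a weak bisimulation up to context, transitions transfer along
such fillings by induction on the context.

The substance is divergence sensitivity. Let `X` be related to a non-divergent `Y` and suppose `X`
diverges. Each τ-step of `X` is either matched by at least one τ-step of `Y`, which can happen only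
finitely often by well-founded induction on `Y`, or it is a step of an `R`-leaf under no prefix
and no replication that is matched by no step at all. In the latter case the multiset of τ-ranks
of such leaves decreases in the Dershowitz–Manna order: the moving leaf is replaced by the leaves
of the up-to context, which sit inside its derivative and so have smaller rank (ranks exist since
`R` is divergence-sensitive). Leaves under a replication never move silently: a τ-step of `!P`
needs complementary actions of `P`, whose weak matches in `Q` make `!Q` diverge.
-/

open Relation

section TauSequences

variable {P P' Q Q' : Proc} {α : Act}

theorem Taus.parL (Q : Proc) (h : Taus P P') : Taus (.par P Q) (.par P' Q) :=
  ReflTransGen.lift (fun X => Proc.par X Q) (fun _ _ => Step.parL Q) P P' h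

theorem Taus.parR (P : Proc) (h : Taus Q Q') : Taus (.par P Q) (.par P Q') :=
  ReflTransGen.lift (fun X => Proc.par P X) (fun _ _ => Step.parR P) Q Q' h

theorem transGen_tau_parL (Q : Proc) (h : TransGen TauStep P P') :
    TransGen TauStep (.par P Q) (.par P' Q) :=
  TransGen.lift (fun X => Proc.par X Q) (fun _ _ => Step.parL Q) P P' h

theorem transGen_tau_parR (P : Proc) (h : TransGen TauStep Q Q') :
    TransGen TauStep (.par P Q) (.par P Q') :=
  TransGen.lift (fun X => Proc.par P X) (fun _ _ => Step.parR P) Q Q' h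

theorem Step.weakHat (h : Step P α P') : WeakHat P α P' := by
  cases α with
  | tau => exact .single h
  | inp a => exact ⟨P, P', .refl, h, .refl⟩
  | out a => exact ⟨P, P', .refl, h, .refl⟩

theorem WeakStep.parL (Q : Proc) (h : WeakStep P α P') : WeakStep (.par P Q) α (.par P' Q) :=
  let ⟨_, _, h₁, h₂, h₃⟩ := h
  ⟨_, _, h₁.parL Q, .parL Q h₂, h₃.parL Q⟩

theorem WeakStep.parR (P : Proc) (h : WeakStep Q α Q') : WeakStep (.par P Q) α (.par P Q') :=
  let ⟨_, _, h₁, h₂, h₃⟩ := h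
  ⟨_, _, h₁.parR P, .parR P h₂, h₃.parR P⟩

theorem WeakHat.parL (Q : Proc) (h : WeakHat P α P') : WeakHat (.par P Q) α (.par P' Q) := by
  cases α with
  | tau => exact Taus.parL Q h
  | inp a => exact WeakStep.parL Q h
  | out a => exact WeakStep.parL Q h

theorem WeakHat.parR (P : Proc) (h : WeakHat Q α Q') : WeakHat (.par P Q) α (.par P Q') := by
  cases α with
  | tau => exact Taus.parR P h
  | inp a => exact WeakStep.parR P h
  | out a => exact WeakStep.parR P h

theorem transGen_par_of_tauStep {P₁ P₂ Q₁ Q₂ : Proc} (hP : Taus P P₁) (hQ : Taus Q Q₁)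
    (hs : TauStep (.par P₁ Q₁) (.par P₂ Q₂)) (hP' : Taus P₂ P') (hQ' : Taus Q₂ Q') :
    TransGen TauStep (.par P Q) (.par P' Q') :=
  TransGen.trans_right ((hP.parL Q).trans (hQ.parR P₁))
    (TransGen.head' hs ((hP'.parL Q₂).trans (hQ'.parR P')))

theorem WeakStep.comL {a : ℕ} (hP : WeakStep P (.out a) P') (hQ : WeakStep Q (.inp a) Q') :
    TransGen TauStep (.par P Q) (.par P' Q') :=
  let ⟨_, _, hP₁, hP₂, hP₃⟩ := hP
  let ⟨_, _, hQ₁, hQ₂, hQ₃⟩ := hQ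
  transGen_par_of_tauStep hP₁ hQ₁ (.comL hP₂ hQ₂) hP₃ hQ₃

theorem WeakStep.comR {a : ℕ} (hP : WeakStep P (.out a) P') (hQ : WeakStep Q (.inp a) Q') :
    TransGen TauStep (.par Q P) (.par Q' P') :=
  let ⟨_, _, hP₁, hP₂, hP₃⟩ := hP
  let ⟨_, _, hQ₁, hQ₂, hQ₃⟩ := hQ
  transGen_par_of_tauStep hQ₁ hP₁ (.comR hP₂ hQ₂) hQ₃ hP₃

theorem Step.exists_inp_out_of_tau (h : Step P .tau P') :
    ∃ a U V, Step P (.inp a) U ∧ Step P (.out a) V := by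
  generalize hα : Act.tau = α at h
  induction h with
  | inp | out => cases hα
  | comL hP hQ => exact ⟨_, _, _, .parR _ hQ, .parL _ hP⟩
  | comR hP hQ => exact ⟨_, _, _, .parL _ hQ, .parR _ hP⟩
  | parL Q _ ih =>
    obtain ⟨a, _, _, hU, hV⟩ := ih hα
    exact ⟨a, _, _, .parL Q hU, .parL Q hV⟩
  | parR Q _ ih =>
    obtain ⟨a, _, _, hU, hV⟩ := ih hα
    exact ⟨a, _, _, .parR Q hU, .parR Q hV⟩
  | bang _ ih =>
    obtain ⟨a, _, _, hU, hV⟩ := ih hα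
    exact ⟨a, _, _, .bang hU, .bang hV⟩
  | bangCom hU hV => exact ⟨_, _, _, .bang hU, .bang hV⟩

end TauSequences

section Termination

theorem Acc.of_simulation {α : Type*} {r T : α → α → Prop}
    (hT : ∀ a b a', T a b → r a' a → ∃ b', r b' b ∧ T a' b') {a b : α} (hb : Acc r b)
    (hab : T a b) : Acc r a := by
  induction hb generalizing a with
  | intro b _ ih =>
    refine ⟨a, fun a' ha' => ?_⟩
    obtain ⟨b', hb', hT'⟩ := hT a b a' hab ha'
    exact ih b' hb' hT'

theorem Acc.rank_le_of_simulation {α : Type*} {r T : α → α → Prop}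
    (hT : ∀ a b a', T a b → r a' a → ∃ b', r b' b ∧ T a' b') {a b : α} (hb : Acc r b)
    (ha : Acc r a) (hab : T a b) : ha.rank ≤ hb.rank := by
  induction hb generalizing a with
  | intro b hb ih =>
    rw [ha.rank_eq]
    refine Ordinal.iSup_le fun ⟨a', ha'⟩ => ?_
    obtain ⟨b', hb', hT'⟩ := hT a b a' hab ha'
    exact Order.succ_le_of_lt ((ih b' hb' _ hT').trans_lt ((Acc.intro b hb).rank_lt_of_rel hb'))

variable {P P' Q : Proc}

theorem divergent_iff_not_acc : Divergent P ↔ ¬Acc (flip TauStep) P :=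
  (not_acc_iff_exists_descending_chain (r := flip TauStep)).symm

theorem acc_iff_not_divergent : Acc (flip TauStep) P ↔ ¬Divergent P := by
  rw [divergent_iff_not_acc, not_not]

theorem Divergent.exists_tauStep (h : Divergent P) : ∃ P', TauStep P P' ∧ Divergent P' := by
  rw [divergent_iff_not_acc] at h
  obtain ⟨P', hP', hs⟩ := exists_not_acc_lt_of_not_acc h
  exact ⟨P', hs, divergent_iff_not_acc.mpr hP'⟩

theorem divergent_of_forall_exists_transGen {X : Proc → Prop}
    (hX : ∀ P, X P → ∃ P', TransGen TauStep P P' ∧ X P') (hP : X P) : Divergent P := by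
  rw [divergent_iff_not_acc]
  intro hacc
  replace hacc := hacc.transGen
  induction hacc with
  | intro P _ ih =>
    obtain ⟨P', hP', hXP'⟩ := hX P hP
    exact ih P' (transGen_swap.mpr hP') hXP'

theorem acc_of_acc_parL (h : Acc (flip TauStep) (.par P Q)) : Acc (flip TauStep) P :=
  h.of_simulation (T := fun X Y => Y = .par X Q)
    (fun _ _ X' hY hs => ⟨.par X' Q, hY ▸ Step.parL Q hs, rfl⟩) rfl

theorem acc_of_acc_parR (h : Acc (flip TauStep) (.par P Q)) : Acc (flip TauStep) Q :=
  h.of_simulation (T := fun X Y => Y = .par P X)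
    (fun _ _ X' hY hs => ⟨.par P X', hY ▸ Step.parR P hs, rfl⟩) rfl

end Termination

section StructuralCongruence

/-- Unfolding `!P ≡ P | !P` is what relates `P' | !P` to `!Q` when a τ-step `P ⟶ P'` is matched by
no step of `Q`. -/
inductive SCRep : Proc → Proc → Prop where
  | refl (P : Proc) : SCRep P P
  | symm {P Q : Proc} : SCRep P Q → SCRep Q P
  | trans {P Q R : Proc} : SCRep P Q → SCRep Q R → SCRep P R
  | inp (a : ℕ) {P Q : Proc} : SCRep P Q → SCRep (.inp a P) (.inp a Q)
  | out (a : ℕ) {P Q : Proc} : SCRep P Q → SCRep (.out a P) (.out a Q)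
  | par {P P' Q Q' : Proc} : SCRep P P' → SCRep Q Q' → SCRep (.par P Q) (.par P' Q')
  | bang {P Q : Proc} : SCRep P Q → SCRep (.bang P) (.bang Q)
  | parNil (P : Proc) : SCRep (.par P .nil) P
  | parAssoc (P Q R : Proc) : SCRep (.par P (.par Q R)) (.par (.par P Q) R)
  | parComm (P Q : Proc) : SCRep (.par P Q) (.par Q P)
  | bangUnf (P : Proc) : SCRep (.bang P) (.par P (.bang P))

theorem SC.toSCRep {P Q : Proc} (h : SC P Q) : SCRep P Q := by
  induction h with
  | refl P => exact .refl P
  | symm _ ih => exact ih.symm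
  | trans _ _ ih₁ ih₂ => exact ih₁.trans ih₂
  | inp a _ ih => exact ih.inp a
  | out a _ ih => exact ih.out a
  | par _ _ ih₁ ih₂ => exact ih₁.par ih₂
  | bang _ ih => exact ih.bang
  | parNil P => exact .parNil P
  | parAssoc P Q R => exact .parAssoc P Q R
  | parComm P Q => exact .parComm P Q

theorem SCRep.par_left_comm (P Q R : Proc) : SCRep (.par P (.par Q R)) (.par Q (.par P R)) :=
  (SCRep.parAssoc P Q R).trans (((SCRep.parComm P Q).par (.refl R)).trans (.symm (.parAssoc Q P R)))

def SimUpToSCRep (P Q : Proc) : Prop :=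
  ∀ α P', Step P α P' → ∃ Q', Step Q α Q' ∧ SCRep P' Q'

namespace SimUpToSCRep

variable {P P' Q Q' R : Proc}

protected theorem rfl : SimUpToSCRep P P :=
  fun _ P' hs => ⟨P', hs, .refl P'⟩

protected theorem trans (h₁ : SimUpToSCRep P Q) (h₂ : SimUpToSCRep Q R) : SimUpToSCRep P R := by
  intro α P' hs
  obtain ⟨Q', hQ', e₁⟩ := h₁ α P' hs
  obtain ⟨R', hR', e₂⟩ := h₂ α Q' hQ'
  exact ⟨R', hR', e₁.trans e₂⟩

theorem inp (a : ℕ) (h : SCRep P Q) : SimUpToSCRep (.inp a P) (.inp a Q) := by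
  rintro α P' ⟨⟩
  exact ⟨Q, .inp a Q, h⟩

theorem out (a : ℕ) (h : SCRep P Q) : SimUpToSCRep (.out a P) (.out a Q) := by
  rintro α P' ⟨⟩
  exact ⟨Q, .out a Q, h⟩

theorem par (h₁ : SimUpToSCRep P P') (h₂ : SimUpToSCRep Q Q') (e₁ : SCRep P P')
    (e₂ : SCRep Q Q') : SimUpToSCRep (.par P Q) (.par P' Q') := by
  intro α X hs
  cases hs with
  | comL hP hQ =>
    obtain ⟨P₁, hP₁, e₁'⟩ := h₁ _ _ hP
    obtain ⟨Q₁, hQ₁, e₂'⟩ := h₂ _ _ hQ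
    exact ⟨_, .comL hP₁ hQ₁, e₁'.par e₂'⟩
  | comR hQ hP =>
    obtain ⟨P₁, hP₁, e₁'⟩ := h₁ _ _ hP
    obtain ⟨Q₁, hQ₁, e₂'⟩ := h₂ _ _ hQ
    exact ⟨_, .comR hQ₁ hP₁, e₁'.par e₂'⟩
  | parL _ hP =>
    obtain ⟨P₁, hP₁, e₁'⟩ := h₁ _ _ hP
    exact ⟨_, .parL _ hP₁, e₁'.par e₂⟩
  | parR _ hQ =>
    obtain ⟨Q₁, hQ₁, e₂'⟩ := h₂ _ _ hQ
    exact ⟨_, .parR _ hQ₁, e₁.par e₂'⟩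

theorem bang (h : SimUpToSCRep P Q) (e : SCRep P Q) : SimUpToSCRep (.bang P) (.bang Q) := by
  intro α X hs
  cases hs with
  | bang hP =>
    obtain ⟨Q₁, hQ₁, e₁⟩ := h _ _ hP
    exact ⟨_, .bang hQ₁, e₁.par e.bang⟩
  | bangCom hP₁ hP₂ =>
    obtain ⟨Q₁, hQ₁, e₁⟩ := h _ _ hP₁
    obtain ⟨Q₂, hQ₂, e₂⟩ := h _ _ hP₂
    exact ⟨_, .bangCom hQ₁ hQ₂, e₁.par (e₂.par e.bang)⟩

theorem parNil : SimUpToSCRep (.par P .nil) P := by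
  intro α X hs
  cases hs with
  | comL _ h | comR h _ | parR _ h => cases h
  | parL _ h => exact ⟨_, h, .parNil _⟩

theorem parNil_symm : SimUpToSCRep P (.par P .nil) :=
  fun _ X hs => ⟨_, .parL _ hs, .symm (.parNil X)⟩

theorem parComm : SimUpToSCRep (.par P Q) (.par Q P) := by
  intro α X hs
  cases hs with
  | comL hP hQ => exact ⟨_, .comR hP hQ, .parComm _ _⟩
  | comR hQ hP => exact ⟨_, .comL hQ hP, .parComm _ _⟩
  | parL _ hP => exact ⟨_, .parR _ hP, .parComm _ _⟩
  | parR _ hQ => exact ⟨_, .parL _ hQ, .parComm _ _⟩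

theorem parAssoc : SimUpToSCRep (.par P (.par Q R)) (.par (.par P Q) R) := by
  intro α X hs
  cases hs with
  | comL hP hQR =>
    cases hQR with
    | parL _ hQ => exact ⟨_, .parL _ (.comL hP hQ), .parAssoc _ _ _⟩
    | parR _ hR => exact ⟨_, .comL (.parL _ hP) hR, .parAssoc _ _ _⟩
  | comR hQR hP =>
    cases hQR with
    | parL _ hQ => exact ⟨_, .parL _ (.comR hQ hP), .parAssoc _ _ _⟩
    | parR _ hR => exact ⟨_, .comR hR (.parL _ hP), .parAssoc _ _ _⟩
  | parL _ hP => exact ⟨_, .parL _ (.parL _ hP), .parAssoc _ _ _⟩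
  | parR _ hQR =>
    cases hQR with
    | comL hQ hR => exact ⟨_, .comL (.parR _ hQ) hR, .parAssoc _ _ _⟩
    | comR hR hQ => exact ⟨_, .comR hR (.parR _ hQ), .parAssoc _ _ _⟩
    | parL _ hQ => exact ⟨_, .parL _ (.parR _ hQ), .parAssoc _ _ _⟩
    | parR _ hR => exact ⟨_, .parR _ hR, .parAssoc _ _ _⟩

theorem parAssoc_symm : SimUpToSCRep (.par (.par P Q) R) (.par P (.par Q R)) :=
  parComm.trans <| parAssoc.trans <| parComm.trans <| parAssoc.trans parComm

theorem bangUnf : SimUpToSCRep (.bang P) (.par P (.bang P)) := by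
  intro α X hs
  cases hs with
  | bang hP => exact ⟨_, .parL _ hP, .refl _⟩
  | bangCom hP₁ hP₂ => exact ⟨_, .comL hP₂ (.bang hP₁), .par_left_comm _ _ _⟩

theorem bangUnf_symm : SimUpToSCRep (.par P (.bang P)) (.bang P) := by
  intro α X hs
  cases hs with
  | comL hP hB =>
    cases hB with
    | bang hP' => exact ⟨_, .bangCom hP' hP, .par_left_comm _ _ _⟩
  | comR hB hP =>
    cases hB with
    | bang hP' => exact ⟨_, .bangCom hP hP', .refl _⟩
  | parL _ hP => exact ⟨_, .bang hP, .refl _⟩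
  | parR _ hB =>
    cases hB with
    | bang hP =>
      exact ⟨_, .bang hP, .symm <| ((SCRep.refl _).par (.bangUnf P)).trans (.par_left_comm _ _ _)⟩
    | bangCom hP₁ hP₂ =>
      exact ⟨_, .bangCom hP₁ hP₂, .symm <| ((SCRep.refl _).par
        (((SCRep.refl _).par (.bangUnf P)).trans (.par_left_comm _ _ _))).trans
          (.par_left_comm _ _ _)⟩

end SimUpToSCRep

namespace SCRep

variable {P P' Q : Proc} {α : Act}

theorem simUpTo (h : SCRep P Q) : SimUpToSCRep P Q ∧ SimUpToSCRep Q P := by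
  induction h with
  | refl P => exact ⟨.rfl, .rfl⟩
  | symm _ ih => exact ih.symm
  | trans _ _ ih₁ ih₂ => exact ⟨ih₁.1.trans ih₂.1, ih₂.2.trans ih₁.2⟩
  | inp a h _ => exact ⟨.inp a h, .inp a h.symm⟩
  | out a h _ => exact ⟨.out a h, .out a h.symm⟩
  | par h₁ h₂ ih₁ ih₂ => exact ⟨ih₁.1.par ih₂.1 h₁ h₂, ih₁.2.par ih₂.2 h₁.symm h₂.symm⟩
  | bang h ih => exact ⟨ih.1.bang h, ih.2.bang h.symm⟩
  | parNil P => exact ⟨.parNil, .parNil_symm⟩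
  | parAssoc P Q R => exact ⟨.parAssoc, .parAssoc_symm⟩
  | parComm P Q => exact ⟨.parComm, .parComm⟩
  | bangUnf P => exact ⟨.bangUnf, .bangUnf_symm⟩

theorem step (h : SCRep P Q) (hs : Step P α P') : ∃ Q', Step Q α Q' ∧ SCRep P' Q' :=
  h.simUpTo.1 α P' hs

theorem taus (h : SCRep P Q) (ht : Taus P P') : ∃ Q', Taus Q Q' ∧ SCRep P' Q' := by
  induction ht with
  | refl => exact ⟨Q, .refl, h⟩
  | tail _ hs ih =>
    obtain ⟨Q₁, hQ₁, e₁⟩ := ih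
    obtain ⟨Q₂, hQ₂, e₂⟩ := e₁.step hs
    exact ⟨Q₂, hQ₁.tail hQ₂, e₂⟩

theorem transGen (h : SCRep P Q) (ht : TransGen TauStep P P') :
    ∃ Q', TransGen TauStep Q Q' ∧ SCRep P' Q' := by
  induction ht with
  | single hs =>
    obtain ⟨Q₁, hQ₁, e₁⟩ := h.step hs
    exact ⟨Q₁, .single hQ₁, e₁⟩
  | tail _ hs ih =>
    obtain ⟨Q₁, hQ₁, e₁⟩ := ih
    obtain ⟨Q₂, hQ₂, e₂⟩ := e₁.step hs
    exact ⟨Q₂, hQ₁.tail hQ₂, e₂⟩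

theorem weakStep (h : SCRep P Q) (hw : WeakStep P α P') : ∃ Q', WeakStep Q α Q' ∧ SCRep P' Q' := by
  obtain ⟨P₁, P₂, h₁, h₂, h₃⟩ := hw
  obtain ⟨Q₁, hQ₁, e₁⟩ := h.taus h₁
  obtain ⟨Q₂, hQ₂, e₂⟩ := e₁.step h₂
  obtain ⟨Q₃, hQ₃, e₃⟩ := e₂.taus h₃
  exact ⟨Q₃, ⟨Q₁, Q₂, hQ₁, hQ₂, hQ₃⟩, e₃⟩

theorem weakHat (h : SCRep P Q) (hw : WeakHat P α P') : ∃ Q', WeakHat Q α Q' ∧ SCRep P' Q' := by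
  cases α with
  | tau => exact h.taus hw
  | inp a => exact h.weakStep hw
  | out a => exact h.weakStep hw

theorem acc (h : SCRep P Q) (hQ : Acc (flip TauStep) Q) : Acc (flip TauStep) P :=
  hQ.of_simulation (fun _ _ _ e hs => e.step hs) h

theorem divergent (h : SCRep P Q) (hP : Divergent P) : Divergent Q := by
  rw [divergent_iff_not_acc] at hP ⊢
  exact fun hQ => hP (h.acc hQ)

end SCRep

variable {Q U V : Proc} {α : Act}

theorem WeakHat.bang (h : WeakHat Q α U) :
    ∃ Y, WeakHat (.bang Q) α Y ∧ SCRep (.par U (.bang Q)) Y :=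
  (SCRep.bangUnf Q).symm.weakHat (h.parL _)

theorem WeakStep.bangCom {a : ℕ} (hU : WeakStep Q (.inp a) U) (hV : WeakStep Q (.out a) V) :
    ∃ Y, TransGen TauStep (.bang Q) Y ∧ SCRep (.par U (.par V (.bang Q))) Y :=
  ((SCRep.bangUnf Q).trans ((SCRep.refl Q).par (.bangUnf Q))).symm.transGen
    ((hV.parL _).comR hU)

theorem divergent_bang_of_weakStep {a : ℕ} (hU : WeakStep Q (.inp a) U)
    (hV : WeakStep Q (.out a) V) : Divergent (.bang Q) := by
  obtain ⟨Y, hY, e⟩ := hU.bangCom hV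
  refine divergent_of_forall_exists_transGen (X := fun P => ∃ W, SCRep P (.par W (.bang Q)))
    ?_ ⟨Q, .bangUnf Q⟩
  rintro P ⟨W, hW⟩
  obtain ⟨P', hP', hWP'⟩ := hW.symm.transGen (transGen_tau_parR W hY)
  refine ⟨P', hP', .par W (.par U V), hWP'.symm.trans ?_⟩
  exact ((SCRep.refl W).par (e.symm.trans (.parAssoc U V _))).trans (.parAssoc W _ _)

end StructuralCongruence

section Rank

variable {P P' Q : Proc}

open Classical in
noncomputable def tauRank (P : Proc) : Ordinal :=
  if h : Acc (flip TauStep) P then h.rank else 0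

theorem tauRank_lt (hP : Acc (flip TauStep) P) (hs : TauStep P P') : tauRank P' < tauRank P := by
  rw [tauRank, tauRank, dif_pos hP, dif_pos (hP.inv hs)]
  exact hP.rank_lt_of_rel hs

theorem tauRank_le_of_simulation {T : Proc → Proc → Prop}
    (hT : ∀ P Q P', T P Q → TauStep P P' → ∃ Q', TauStep Q Q' ∧ T P' Q')
    (hQ : Acc (flip TauStep) Q) (hPQ : T P Q) : tauRank P ≤ tauRank Q := by
  have hP : Acc (flip TauStep) P := hQ.of_simulation hT hPQ
  rw [tauRank, tauRank, dif_pos hP, dif_pos hQ]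
  exact Acc.rank_le_of_simulation hT hQ hP hPQ

def Ctx.isFlat : Ctx → Bool
  | .hole => true
  | .parL C _ => C.isFlat
  | .parR _ C => C.isFlat
  | _ => false

theorem Ctx.tauStep_fill {C : Ctx} (hC : C.isFlat) (hs : TauStep P P') :
    TauStep (C.fill P) (C.fill P') := by
  induction C with
  | hole => exact hs
  | parL C Q ih => exact .parL Q (ih hC)
  | parR Q C ih => exact .parR Q (ih hC)
  | inp | out | bang => simp [Ctx.isFlat] at hC

theorem tauRank_lt_of_tauStep_fill {C : Ctx} {P₁ : Proc} (hP : Acc (flip TauStep) P)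
    (hs : TauStep P P') (hC : C.isFlat) (e : SCRep (C.fill P₁) P') : tauRank P₁ < tauRank P :=
  calc tauRank P₁ ≤ tauRank (C.fill P₁) :=
        tauRank_le_of_simulation (T := fun X Y => Y = C.fill X)
          (fun _ _ X' hY hs => ⟨C.fill X', hY ▸ C.tauStep_fill hC hs, rfl⟩)
          (e.acc (hP.inv hs)) rfl
    _ ≤ tauRank P' := tauRank_le_of_simulation (fun _ _ _ e hs => e.step hs) (hP.inv hs) e
    _ < tauRank P := tauRank_lt hP hs

end Rank

namespace Multiset

variable {α : Type*} [Preorder α] {M N : Multiset α}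

theorem IsDershowitzMannaLT.add_right (h : IsDershowitzMannaLT M N) (U : Multiset α) :
    IsDershowitzMannaLT (M + U) (N + U) := by
  obtain ⟨X, Y, Z, hZ, rfl, rfl, hYZ⟩ := h
  exact ⟨X + U, Y, Z, hZ, add_right_comm X Y U, add_right_comm X Z U, hYZ⟩

theorem IsDershowitzMannaLT.add_left (h : IsDershowitzMannaLT M N) (U : Multiset α) :
    IsDershowitzMannaLT (U + M) (U + N) := by
  simpa only [add_comm U] using h.add_right U

theorem isDershowitzMannaLT_singleton_of_forall_lt {b : α} (h : ∀ a ∈ M, a < b) :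
    IsDershowitzMannaLT M {b} :=
  ⟨0, M, {b}, by simp, (zero_add M).symm, (zero_add _).symm,
    fun a ha => ⟨b, mem_singleton_self b, h a ha⟩⟩

end Multiset

section Closure

variable {R : Proc → Proc → Prop}

/-- Derivations of the congruence closure of `R ∪ Id`, kept as data so that `flatRanks` can be
read off them. -/
inductive CongDeriv (R : Proc → Proc → Prop) : Proc → Proc → Type where
  | base {P Q : Proc} : R P Q → CongDeriv R P Q
  | refl (P : Proc) : CongDeriv R P P
  | inp (a : ℕ) {P Q : Proc} : CongDeriv R P Q → CongDeriv R (.inp a P) (.inp a Q)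
  | out (a : ℕ) {P Q : Proc} : CongDeriv R P Q → CongDeriv R (.out a P) (.out a Q)
  | par {P P' Q Q' : Proc} : CongDeriv R P P' → CongDeriv R Q Q' →
      CongDeriv R (.par P Q) (.par P' Q')
  | bang {P Q : Proc} : CongDeriv R P Q → CongDeriv R (.bang P) (.bang Q)

namespace CongDeriv

noncomputable def flatRanks : {P Q : Proc} → CongDeriv R P Q → Multiset Ordinal
  | P, _, .base _ => {tauRank P}
  | _, _, .par d₁ d₂ => d₁.flatRanks + d₂.flatRanks
  | _, _, _ => 0

def fill {P Q : Proc} (d : CongDeriv R P Q) : (C : Ctx) → CongDeriv R (C.fill P) (C.fill Q)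
  | .hole => d
  | .inp a C => .inp a (d.fill C)
  | .out a C => .out a (d.fill C)
  | .parL C W => .par (d.fill C) (.refl W)
  | .parR W C => .par (.refl W) (d.fill C)
  | .bang C => .bang (d.fill C)

theorem flatRanks_fill {P Q : Proc} (d : CongDeriv R P Q) (C : Ctx) :
    (d.fill C).flatRanks = if C.isFlat then d.flatRanks else 0 := by
  induction C with
  | hole => rfl
  | parL C W ih => exact (add_zero _).trans ih
  | parR W C ih => exact (zero_add _).trans ih
  | inp | out | bang => rfl

def symm (hR : Symmetric R) : {P Q : Proc} → CongDeriv R P Q → CongDeriv R Q P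
  | _, _, .base h => .base (hR h)
  | _, _, .refl P => .refl P
  | _, _, .inp a d => .inp a (d.symm hR)
  | _, _, .out a d => .out a (d.symm hR)
  | _, _, .par d₁ d₂ => .par (d₁.symm hR) (d₂.symm hR)
  | _, _, .bang d => .bang (d.symm hR)

end CongDeriv

def CongClosure (R : Proc → Proc → Prop) (P Q : Proc) : Prop :=
  ∃ U V, SCRep P U ∧ Nonempty (CongDeriv R U V) ∧ SCRep V Q

theorem CongDeriv.congClosure {P Q : Proc} (d : CongDeriv R P Q) : CongClosure R P Q :=
  ⟨P, Q, .refl P, ⟨d⟩, .refl Q⟩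

namespace CongClosure

variable {P P' Q Q' : Proc}

theorem scRep_trans (e : SCRep P P') (h : CongClosure R P' Q) : CongClosure R P Q :=
  let ⟨U, V, hU, hd, hV⟩ := h
  ⟨U, V, e.trans hU, hd, hV⟩

theorem trans_scRep (h : CongClosure R P Q) (e : SCRep Q Q') : CongClosure R P Q' :=
  let ⟨U, V, hU, hd, hV⟩ := h
  ⟨U, V, hU, hd, hV.trans e⟩

theorem symm (hR : Symmetric R) (h : CongClosure R P Q) : CongClosure R Q P :=
  let ⟨U, V, hU, ⟨d⟩, hV⟩ := h
  ⟨V, U, hV.symm, ⟨d.symm hR⟩, hU.symm⟩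

theorem par (h₁ : CongClosure R P P') (h₂ : CongClosure R Q Q') :
    CongClosure R (.par P Q) (.par P' Q') :=
  let ⟨_, _, hU₁, ⟨d₁⟩, hV₁⟩ := h₁
  let ⟨_, _, hU₂, ⟨d₂⟩, hV₂⟩ := h₂
  ⟨_, _, hU₁.par hU₂, ⟨d₁.par d₂⟩, hV₁.par hV₂⟩

theorem bang (h : CongClosure R P Q) : CongClosure R (.bang P) (.bang Q) :=
  let ⟨_, _, hU, ⟨d⟩, hV⟩ := h
  ⟨_, _, hU.bang, ⟨d.bang⟩, hV.bang⟩

theorem of_fill {C : Ctx} {P₁ Q₁ : Proc} (hP : SC P (C.fill P₁)) (hQ : SC Q (C.fill Q₁))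
    (h : R P₁ Q₁) : CongClosure R P Q :=
  ((CongDeriv.base h).fill C).congClosure.scRep_trans hP.toSCRep |>.trans_scRep hQ.toSCRep.symm

end CongClosure

end Closure

section Transfer

variable {R : Proc → Proc → Prop}

def WeakTransfer (R : Proc → Proc → Prop) (P Q : Proc) : Prop :=
  ∀ α P', Step P α P' → ∃ Q', WeakHat Q α Q' ∧ CongClosure R P' Q'

namespace WeakTransfer

variable {P P' Q Q' : Proc}

theorem par (h₁ : WeakTransfer R P P') (h₂ : WeakTransfer R Q Q') (c₁ : CongClosure R P P')
    (c₂ : CongClosure R Q Q') : WeakTransfer R (.par P Q) (.par P' Q') := by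
  intro α X hs
  cases hs with
  | parL _ hP =>
    obtain ⟨P₁, hP₁, c⟩ := h₁ _ _ hP
    exact ⟨_, hP₁.parL Q', c.par c₂⟩
  | parR _ hQ =>
    obtain ⟨Q₁, hQ₁, c⟩ := h₂ _ _ hQ
    exact ⟨_, hQ₁.parR P', c₁.par c⟩
  | comL hP hQ =>
    obtain ⟨P₁, hP₁, c₁'⟩ := h₁ _ _ hP
    obtain ⟨Q₁, hQ₁, c₂'⟩ := h₂ _ _ hQ
    exact ⟨_, (WeakStep.comL hP₁ hQ₁).to_reflTransGen, c₁'.par c₂'⟩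
  | comR hQ hP =>
    obtain ⟨P₁, hP₁, c₁'⟩ := h₁ _ _ hP
    obtain ⟨Q₁, hQ₁, c₂'⟩ := h₂ _ _ hQ
    exact ⟨_, (WeakStep.comR hQ₁ hP₁).to_reflTransGen, c₁'.par c₂'⟩

theorem bang (h : WeakTransfer R P Q) (c : CongClosure R P Q) :
    WeakTransfer R (.bang P) (.bang Q) := by
  intro α X hs
  cases hs with
  | bang hP =>
    obtain ⟨Q₁, hQ₁, c₁⟩ := h _ _ hP
    obtain ⟨Y, hY, e⟩ := WeakHat.bang hQ₁
    exact ⟨Y, hY, (c₁.par c.bang).trans_scRep e⟩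
  | bangCom hP₁ hP₂ =>
    obtain ⟨Q₁, hQ₁, c₁⟩ := h _ _ hP₁
    obtain ⟨Q₂, hQ₂, c₂⟩ := h _ _ hP₂
    obtain ⟨Y, hY, e⟩ := WeakStep.bangCom hQ₁ hQ₂
    exact ⟨Y, hY.to_reflTransGen, (c₁.par (c₂.par c.bang)).trans_scRep e⟩

theorem divergent_bang (h : WeakTransfer R P Q) {a : ℕ} {U V : Proc} (hU : Step P (.inp a) U)
    (hV : Step P (.out a) V) : Divergent (.bang Q) :=
  let ⟨_, hU', _⟩ := h _ _ hU
  let ⟨_, hV', _⟩ := h _ _ hV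
  divergent_bang_of_weakStep hU' hV'

end WeakTransfer

theorem CongDeriv.weakTransfer (hR : IsWeakBisimUptoCtx R) {P Q : Proc} (d : CongDeriv R P Q) :
    WeakTransfer R P Q := by
  induction d with
  | base h =>
    intro α P' hs
    obtain ⟨Q', hQ', C, P₁, Q₁, hP₁, hQ₁, h₁⟩ := hR.2.2 _ _ h α P' hs
    exact ⟨Q', hQ', .of_fill hP₁ hQ₁ h₁⟩
  | refl P => exact fun α P' hs => ⟨P', hs.weakHat, (CongDeriv.refl P').congClosure⟩
  | inp a d => rintro α P' ⟨⟩; exact ⟨_, (Step.inp a _).weakHat, d.congClosure⟩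
  | out a d => rintro α P' ⟨⟩; exact ⟨_, (Step.out a _).weakHat, d.congClosure⟩
  | par d₁ d₂ ih₁ ih₂ => exact ih₁.par ih₂ d₁.congClosure d₂.congClosure
  | bang d ih => exact ih.bang d.congClosure

theorem CongDeriv.progress (hR : IsWeakBisimUptoCtx R) {P Q P' : Proc} (d : CongDeriv R P Q)
    (hs : TauStep P P') (hQ : Acc (flip TauStep) Q) :
    (∃ Q', TransGen TauStep Q Q' ∧ CongClosure R P' Q') ∨
      ∃ U V, ∃ d' : CongDeriv R U V, SCRep P' U ∧ SCRep V Q ∧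
        d'.flatRanks.IsDershowitzMannaLT d.flatRanks := by
  induction d generalizing P' with
  | @base P Q h =>
    obtain ⟨Q', hQ', C, P₁, Q₁, hP₁, hQ₁, h₁⟩ := hR.2.2 _ _ h .tau P' hs
    rcases reflTransGen_iff_eq_or_transGen.mp hQ' with rfl | hQ'
    · have hP : Acc (flip TauStep) P :=
        acc_iff_not_divergent.mpr ((hR.2.1 P Q' h).not.mpr (acc_iff_not_divergent.mp hQ))
      refine .inr ⟨_, _, (CongDeriv.base h₁).fill C, hP₁.toSCRep, hQ₁.toSCRep.symm, ?_⟩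
      refine Multiset.isDershowitzMannaLT_singleton_of_forall_lt fun r hr => ?_
      rw [flatRanks_fill] at hr
      split_ifs at hr with hC
      · rw [Multiset.mem_singleton.mp hr]
        exact tauRank_lt_of_tauStep_fill hP hs hC hP₁.toSCRep.symm
      · simp at hr
    · exact .inl ⟨Q', hQ', .of_fill hP₁ hQ₁ h₁⟩
  | refl P => exact .inl ⟨P', .single hs, (CongDeriv.refl P').congClosure⟩
  | inp | out => cases hs
  | @par P₁ Q₁ P₂ Q₂ d₁ d₂ ih₁ ih₂ =>
    cases hs with
    | parL _ hP =>
      rcases ih₁ hP (acc_of_acc_parL hQ) with ⟨Q', hQ', c⟩ | ⟨U, V, d', hU, hV, hlt⟩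
      · exact .inl ⟨_, transGen_tau_parL Q₂ hQ', c.par d₂.congClosure⟩
      · exact .inr ⟨_, _, d'.par d₂, hU.par (.refl _), hV.par (.refl _), hlt.add_right _⟩
    | parR _ hP =>
      rcases ih₂ hP (acc_of_acc_parR hQ) with ⟨Q', hQ', c⟩ | ⟨U, V, d', hU, hV, hlt⟩
      · exact .inl ⟨_, transGen_tau_parR Q₁ hQ', d₁.congClosure.par c⟩
      · exact .inr ⟨_, _, d₁.par d', (SCRep.refl _).par hU, (SCRep.refl _).par hV, hlt.add_left _⟩
    | comL hP hQ =>
      obtain ⟨_, hP', c₁⟩ := d₁.weakTransfer hR _ _ hP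
      obtain ⟨_, hQ', c₂⟩ := d₂.weakTransfer hR _ _ hQ
      exact .inl ⟨_, WeakStep.comL hP' hQ', c₁.par c₂⟩
    | comR hQ hP =>
      obtain ⟨_, hP', c₁⟩ := d₁.weakTransfer hR _ _ hP
      obtain ⟨_, hQ', c₂⟩ := d₂.weakTransfer hR _ _ hQ
      exact .inl ⟨_, WeakStep.comR hQ' hP', c₁.par c₂⟩
  | bang d =>
    exfalso
    refine acc_iff_not_divergent.mp hQ ?_
    cases hs with
    | bang hP =>
      obtain ⟨a, U, V, hU, hV⟩ := hP.exists_inp_out_of_tau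
      exact (d.weakTransfer hR).divergent_bang hU hV
    | bangCom hU hV => exact (d.weakTransfer hR).divergent_bang hU hV

end Transfer

section Divergence

variable {R : Proc → Proc → Prop}

theorem CongDeriv.not_divergent (hR : IsWeakBisimUptoCtx R) {Y : Proc}
    (hY : Acc (flip TauStep) Y)
    (ih : ∀ Y', TransGen TauStep Y Y' → ∀ X, CongClosure R X Y' → ¬Divergent X)
    {U V : Proc} (d : CongDeriv R U V) (hV : SCRep V Y) : ¬Divergent U := by
  suffices ∀ M : Multiset Ordinal, ∀ U V (d : CongDeriv R U V), d.flatRanks = M →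
      SCRep V Y → ¬Divergent U from this _ U V d rfl hV
  intro M
  induction M using
    WellFounded.induction (Multiset.wellFounded_isDershowitzMannaLT (α := Ordinal)) with
  | _ M ihM =>
    rintro U V d rfl hV hU
    obtain ⟨U₁, hs, hU₁⟩ := hU.exists_tauStep
    rcases d.progress hR hs (hV.acc hY) with ⟨V', hV', c⟩ | ⟨U', V', d', hU', hV', hlt⟩
    · obtain ⟨Y', hY', e⟩ := hV.transGen hV'
      exact ih Y' hY' U₁ (c.trans_scRep e) hU₁
    · exact ihM _ hlt U' V' d' rfl (hV'.trans hV) (hU'.divergent hU₁)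

theorem CongClosure.not_divergent_of_acc (hR : IsWeakBisimUptoCtx R) {X Y : Proc}
    (hY : Acc (TransGen (flip TauStep)) Y) (h : CongClosure R X Y) : ¬Divergent X := by
  induction hY generalizing X with
  | intro Y hY ih =>
    obtain ⟨U, V, hXU, ⟨d⟩, hVY⟩ := h
    have hU := d.not_divergent hR (acc_transGen_iff.mp ⟨Y, hY⟩)
      (fun Y' hY' X' hX' => ih Y' (transGen_swap.mpr hY') hX') hVY
    exact fun hX => hU (hXU.divergent hX)

theorem CongClosure.divergent (hR : IsWeakBisimUptoCtx R) {X Y : Proc} (h : CongClosure R X Y)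
    (hX : Divergent X) : Divergent Y := by
  by_contra hY
  exact h.not_divergent_of_acc hR (acc_iff_not_divergent.mpr hY).transGen hX

end Divergence

theorem CongClosure.isWeakBisim {R : Proc → Proc → Prop} (hR : IsWeakBisimUptoCtx R) :
    IsWeakBisim (CongClosure R) := by
  refine ⟨fun _ _ h => h.symm hR.1,
    fun _ _ h => ⟨h.divergent hR, (h.symm hR.1).divergent hR⟩, ?_⟩
  rintro P Q ⟨U, V, hPU, ⟨d⟩, hVQ⟩ α P' hs
  obtain ⟨U', hU', hPU'⟩ := hPU.step hs
  obtain ⟨V', hV', c⟩ := d.weakTransfer hR α U' hU'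
  obtain ⟨Q', hQ', hVQ'⟩ := hVQ.weakHat hV'
  exact ⟨Q', hQ', (c.scRep_trans hPU').trans_scRep hVQ'⟩

/-- a weak bisimulation up-to context is contained in weak bisimilarity. -/
theorem weak_bisim_upto_ctx_sound (R : Proc → Proc → Prop)
    (h : IsWeakBisimUptoCtx R) : ∀ P Q, R P Q → WBisim P Q :=
  fun _ _ hPQ => ⟨CongClosure R, CongClosure.isWeakBisim h, (CongDeriv.base hPQ).congClosure⟩
end

section
/- In CCS⁻, strong bisimilarity is strictly contained in weak bisimilarity: for distinct names c and d, the processes P₁ = !(c.d.0) | !(c̄.0) | d.0 and P₂ = !(c.d.0) | !(c̄.0) | !(c.0) satisfy P₁ ≈ P₂ but not P₁ ~ P₂. -/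
/-- Parallel trees with leaves among `0`, `d.0`, `!(c.d.0)`, `!(c̄.0)`, `!(c.0)`. -/
inductive PTree (c d : ℕ) : Proc → Prop
  | nil : PTree c d .nil
  | dnil : PTree c d (.inp d .nil)
  | A : PTree c d (.bang (.inp c (.inp d .nil)))
  | B : PTree c d (.bang (.out c .nil))
  | C : PTree c d (.bang (.inp c .nil))
  | par {P Q : Proc} : PTree c d P → PTree c d Q → PTree c d (.par P Q)

inductive HasA (c d : ℕ) : Proc → Prop
  | base : HasA c d (.bang (.inp c (.inp d .nil)))
  | parL {P Q : Proc} : HasA c d P → HasA c d (.par P Q)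
  | parR {P Q : Proc} : HasA c d Q → HasA c d (.par P Q)

inductive HasB (c : ℕ) : Proc → Prop
  | base : HasB c (.bang (.out c .nil))
  | parL {P Q : Proc} : HasB c P → HasB c (.par P Q)
  | parR {P Q : Proc} : HasB c Q → HasB c (.par P Q)

inductive HasD (d : ℕ) : Proc → Prop
  | base : HasD d (.inp d .nil)
  | parL {P Q : Proc} : HasD d P → HasD d (.par P Q)
  | parR {P Q : Proc} : HasD d Q → HasD d (.par P Q)

lemma ptree_closure {c d : ℕ} :
    ∀ {X α X'}, Step X α X' → PTree c d X →
      PTree c d X' ∧ (HasA c d X → HasA c d X') ∧ (HasB c X → HasB c X') ∧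
      (α = .tau ∨ α = .inp c ∨ α = .out c ∨ (α = .inp d ∧ HasD d X)) := by
  intro X α X' h
  induction h with
  | inp a P =>
      intro hT
      cases hT with
      | dnil =>
          refine ⟨.nil, ?_, ?_, .inr (.inr (.inr ⟨rfl, .base⟩))⟩ <;>
            (intro h; cases h)
  | out a P => intro hT; cases hT
  | comL hP hQ ihP ihQ =>
      intro hT
      cases hT with
      | par hTP hTQ =>
          obtain ⟨hTP', hAP, hBP, _⟩ := ihP hTP
          obtain ⟨hTQ', hAQ, hBQ, _⟩ := ihQ hTQ
          refine ⟨.par hTP' hTQ', ?_, ?_, .inl rfl⟩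
          · intro h; cases h with
            | parL h => exact .parL (hAP h)
            | parR h => exact .parR (hAQ h)
          · intro h; cases h with
            | parL h => exact .parL (hBP h)
            | parR h => exact .parR (hBQ h)
  | comR hP hQ ihP ihQ =>
      intro hT
      cases hT with
      | par hTQ hTP =>
          obtain ⟨hTP', hAP, hBP, _⟩ := ihP hTP
          obtain ⟨hTQ', hAQ, hBQ, _⟩ := ihQ hTQ
          refine ⟨.par hTQ' hTP', ?_, ?_, .inl rfl⟩
          · intro h; cases h with
            | parL h => exact .parL (hAQ h)
            | parR h => exact .parR (hAP h)
          · intro h; cases h with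
            | parL h => exact .parL (hBQ h)
            | parR h => exact .parR (hBP h)
  | parL Q hP ih =>
      intro hT
      cases hT with
      | par hTP hTQ =>
          obtain ⟨hTP', hAP, hBP, hα⟩ := ih hTP
          refine ⟨.par hTP' hTQ, ?_, ?_, ?_⟩
          · intro h; cases h with
            | parL h => exact .parL (hAP h)
            | parR h => exact .parR h
          · intro h; cases h with
            | parL h => exact .parL (hBP h)
            | parR h => exact .parR h
          · rcases hα with h | h | h | ⟨h, hd⟩
            · exact .inl h
            · exact .inr (.inl h)
            · exact .inr (.inr (.inl h))
            · exact .inr (.inr (.inr ⟨h, .parL hd⟩))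
  | parR Q hP ih =>
      intro hT
      cases hT with
      | par hTQ hTP =>
          obtain ⟨hTP', hAP, hBP, hα⟩ := ih hTP
          refine ⟨.par hTQ hTP', ?_, ?_, ?_⟩
          · intro h; cases h with
            | parL h => exact .parL h
            | parR h => exact .parR (hAP h)
          · intro h; cases h with
            | parL h => exact .parL h
            | parR h => exact .parR (hBP h)
          · rcases hα with h | h | h | ⟨h, hd⟩
            · exact .inl h
            · exact .inr (.inl h)
            · exact .inr (.inr (.inl h))
            · exact .inr (.inr (.inr ⟨h, .parR hd⟩))
  | bang hP ih =>
      intro hT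
      cases hT with
      | A =>
          cases hP
          refine ⟨.par .dnil .A, fun _ => .parR .base, ?_, .inr (.inl rfl)⟩
          intro h; cases h
      | B =>
          cases hP
          refine ⟨.par .nil .B, ?_, fun _ => .parR .base, .inr (.inr (.inl rfl))⟩
          intro h; cases h
      | C =>
          cases hP
          refine ⟨.par .nil .C, ?_, ?_, .inr (.inl rfl)⟩ <;> (intro h; cases h)
  | bangCom hP hP' ihP ihP' =>
      intro hT
      cases hT with
      | A => cases hP'
      | B => cases hP
      | C => cases hP'

lemma hasA_step {c d : ℕ} {X : Proc} (h : HasA c d X) :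
    ∃ X', Step X (.inp c) X' ∧ HasD d X' := by
  induction h with
  | base => exact ⟨_, .bang (.inp c _), .parL .base⟩
  | parL h ih =>
      obtain ⟨X', hs, hd⟩ := ih
      exact ⟨_, .parL _ hs, .parL hd⟩
  | parR h ih =>
      obtain ⟨X', hs, hd⟩ := ih
      exact ⟨_, .parR _ hs, .parR hd⟩

lemma hasB_step {c : ℕ} {X : Proc} (h : HasB c X) :
    ∃ X', Step X (.out c) X' := by
  induction h with
  | base => exact ⟨_, .bang (.out c _)⟩
  | parL h ih =>
      obtain ⟨X', hs⟩ := ih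
      exact ⟨_, .parL _ hs⟩
  | parR h ih =>
      obtain ⟨X', hs⟩ := ih
      exact ⟨_, .parR _ hs⟩

lemma hasD_step {d : ℕ} {X : Proc} (h : HasD d X) :
    ∃ X', Step X (.inp d) X' := by
  induction h with
  | base => exact ⟨_, .inp d _⟩
  | parL h ih =>
      obtain ⟨X', hs⟩ := ih
      exact ⟨_, .parL _ hs⟩
  | parR h ih =>
      obtain ⟨X', hs⟩ := ih
      exact ⟨_, .parR _ hs⟩

lemma tauD {c d : ℕ} {X : Proc} (hA : HasA c d X) (hB : HasB c X) :
    ∃ X', Step X .tau X' ∧ HasD d X' := by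
  induction hA with
  | base => cases hB
  | @parL P Q hA ih =>
      cases hB with
      | parL hB =>
          obtain ⟨X', hs, hd⟩ := ih hB
          exact ⟨_, .parL _ hs, .parL hd⟩
      | parR hB =>
          obtain ⟨P', hsP, hdP⟩ := hasA_step hA
          obtain ⟨Q', hsQ⟩ := hasB_step hB
          exact ⟨_, .comR hsQ hsP, .parL hdP⟩
  | @parR P Q hA ih =>
      cases hB with
      | parR hB =>
          obtain ⟨X', hs, hd⟩ := ih hB
          exact ⟨_, .parR _ hs, .parR hd⟩
      | parL hB =>
          obtain ⟨P', hsP⟩ := hasB_step hB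
          obtain ⟨Q', hsQ, hdQ⟩ := hasA_step hA
          exact ⟨_, .comL hsP hsQ, .parR hdQ⟩

/-- A good state: a tree containing both `!(c.d.0)` and `!(c̄.0)`. -/
def Good (c d : ℕ) (X : Proc) : Prop := PTree c d X ∧ HasA c d X ∧ HasB c X

lemma good_divergent {c d : ℕ} {X : Proc} (h : Good c d X) : Divergent X := by
  have step : ∀ x : {Y : Proc // Good c d Y},
      ∃ y : {Y : Proc // Good c d Y}, TauStep x.1 y.1 := by
    rintro ⟨Y, hT, hA, hB⟩
    obtain ⟨Y', hs, _⟩ := tauD hA hB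
    obtain ⟨hT', hA', hB', _⟩ := ptree_closure hs hT
    exact ⟨⟨Y', hT', hA' hA, hB' hB⟩, hs⟩
  let g : {Y : Proc // Good c d Y} → {Y : Proc // Good c d Y} :=
    fun x => (step x).choose
  have hg : ∀ x, TauStep x.1 (g x).1 := fun x => (step x).choose_spec
  let f : ℕ → {Y : Proc // Good c d Y} :=
    fun n => Nat.rec ⟨X, h⟩ (fun _ x => g x) n
  exact ⟨fun n => (f n).1, rfl, fun n => hg (f n)⟩

/-- strong bisimilarity is strictly contained in weak bisimilarity:
    `P₁ = !(c.d.0) | !(c̄.0) | d.0` and `P₂ = !(c.d.0) | !(c̄.0) | !(c.0)` are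
    weakly but not strongly bisimilar. -/
theorem sbisim_strict_subset_wbisim (c d : ℕ) (hcd : c ≠ d) :
    WBisim
      (.par (.par (.bang (.inp c (.inp d .nil))) (.bang (.out c .nil))) (.inp d .nil))
      (.par (.par (.bang (.inp c (.inp d .nil))) (.bang (.out c .nil))) (.bang (.inp c .nil))) ∧
    ¬ SBisim
      (.par (.par (.bang (.inp c (.inp d .nil))) (.bang (.out c .nil))) (.inp d .nil))
      (.par (.par (.bang (.inp c (.inp d .nil))) (.bang (.out c .nil))) (.bang (.inp c .nil))) := by
  have hG1 : Good c d
      (.par (.par (.bang (.inp c (.inp d .nil))) (.bang (.out c .nil))) (.inp d .nil)) :=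
    ⟨.par (.par .A .B) .dnil, .parL (.parL .base), .parL (.parR .base)⟩
  have hG2 : Good c d
      (.par (.par (.bang (.inp c (.inp d .nil))) (.bang (.out c .nil))) (.bang (.inp c .nil))) :=
    ⟨.par (.par .A .B) .C, .parL (.parL .base), .parL (.parR .base)⟩
  constructor
  · refine ⟨fun X Y => Good c d X ∧ Good c d Y, ⟨fun X Y h => ⟨h.2, h.1⟩, ?_, ?_⟩, hG1, hG2⟩
    · intro P Q ⟨hP, hQ⟩
      exact iff_of_true (good_divergent hP) (good_divergent hQ)
    · rintro P Q ⟨⟨hTP, hAP, hBP⟩, hQ⟩ α P' hstep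
      obtain ⟨hTP', hAP', hBP', hα⟩ := ptree_closure hstep hTP
      have hP' : Good c d P' := ⟨hTP', hAP' hAP, hBP' hBP⟩
      obtain ⟨hTQ, hAQ, hBQ⟩ := id hQ
      rcases hα with rfl | rfl | rfl | ⟨rfl, _⟩
      · exact ⟨Q, Relation.ReflTransGen.refl, hP', hQ⟩
      · obtain ⟨Q', hs, _⟩ := hasA_step hAQ
        obtain ⟨hTQ', hAQ', hBQ', _⟩ := ptree_closure hs hTQ
        exact ⟨Q', ⟨Q, Q', .refl, hs, .refl⟩, hP', hTQ', hAQ' hAQ, hBQ' hBQ⟩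
      · obtain ⟨Q', hs⟩ := hasB_step hBQ
        obtain ⟨hTQ', hAQ', hBQ', _⟩ := ptree_closure hs hTQ
        exact ⟨Q', ⟨Q, Q', .refl, hs, .refl⟩, hP', hTQ', hAQ' hAQ, hBQ' hBQ⟩
      · obtain ⟨Q₁, hτ, hD⟩ := tauD hAQ hBQ
        obtain ⟨hTQ₁, hAQ₁, hBQ₁, _⟩ := ptree_closure hτ hTQ
        obtain ⟨Q', hs⟩ := hasD_step hD
        obtain ⟨hTQ', hAQ', hBQ', _⟩ := ptree_closure hs hTQ₁
        exact ⟨Q', ⟨Q₁, Q', .single hτ, hs, .refl⟩, hP',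
          hTQ', hAQ' (hAQ₁ hAQ), hBQ' (hBQ₁ hBQ)⟩
  · rintro ⟨R, ⟨hsym, hdiv, htr⟩, hR⟩
    have hstep : Step
        (.par (.par (.bang (.inp c (.inp d .nil))) (.bang (.out c .nil))) (.inp d .nil))
        (.inp d)
        (.par (.par (.bang (.inp c (.inp d .nil))) (.bang (.out c .nil))) .nil) :=
      .parR _ (.inp d .nil)
    obtain ⟨Q', hQ', -⟩ := htr _ _ hR _ _ hstep
    obtain ⟨-, -, -, hα⟩ := ptree_closure hQ' hG2.1
    rcases hα with h | h | h | ⟨-, hD⟩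
    · cases h
    · exact hcd (Act.inp.inj h).symm
    · cases h
    · cases hD with
      | parL h =>
          cases h with
          | parL h => cases h
          | parR h => cases h
      | parR h => cases h
end

section
/- In CCS⁻, if P is not divergent and P ⟶τ P', then P is not strongly bisimilar to P' (P ≁ P'). -/
/-- if `P` is not divergent and `P ⟶τ P'`, then `P ≁ P'`. -/
theorem tau_state_changing_sbisim (P P' : Proc)
    (hnd : ¬ Divergent P) (hs : TauStep P P') : ¬ SBisim P P' := by
  rintro ⟨R, ⟨hsym, hdiv, hstep⟩, hR⟩
  apply hnd
  have key : ∀ pq : {pq : Proc × Proc // R pq.1 pq.2 ∧ TauStep pq.1 pq.2},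
      {pq' : {pq : Proc × Proc // R pq.1 pq.2 ∧ TauStep pq.1 pq.2} // pq'.1.1 = pq.1.2} := by
    rintro ⟨⟨A, B⟩, hAB, hsAB⟩
    have h := hstep A B hAB .tau B hsAB
    exact ⟨⟨(B, h.choose), h.choose_spec.2, h.choose_spec.1⟩, rfl⟩
  let g : ℕ → {pq : Proc × Proc // R pq.1 pq.2 ∧ TauStep pq.1 pq.2} :=
    fun n => Nat.rec ⟨(P, P'), hR, hs⟩ (fun _ ih => (key ih).1) n
  refine ⟨fun n => (g n).1.1, rfl, fun n => ?_⟩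
  have h1 : (g (n+1)).1.1 = (g n).1.2 := (key (g n)).2
  show TauStep (g n).1.1 (g (n+1)).1.1
  rw [h1]
  exact (g n).2.2
end
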